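/- Let F* ⊣ F_* : 𝒜 → ℬ be a morphism of locally finitely presentable categories. Every object (M, B, f : F_*(M) → B) of F_*↓ℬ with M finitely presented in 𝒜 and f a pushout of a morphism k : K → K' between finitely presented objects of ℬ along some a : K → F_*(M), is a finitely presented object of the comma category F_*↓ℬ. -/

import Mathlib

open CategoryTheory Limits Opposite

universe w v u

section Defs

variable {𝒞 : Type u} [Category.{v} 𝒞]

/-- An object `K` is finitely presented if `Hom(K, -)` preserves filtered colimits. -/
def IsFinPres (K : 𝒞) : Prop :=
  ∀ (J : Type v) (_ : SmallCategory J) (_ : IsFiltered J),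
    Nonempty (PreservesColimitsOfShape J (coyoneda.obj (op K)))

/-- A category is locally finitely presentable if it is cocomplete and admits an essentially
small family of finitely presented objects such that every object is a filtered colimit of
objects of this family. -/
class IsLFP (𝒞 : Type u) [Category.{v} 𝒞] extends HasColimits 𝒞 : Prop where
  exists_gen : ∃ S : Set 𝒞, Small.{v} S ∧ (∀ K ∈ S, IsFinPres K) ∧
    ∀ X : 𝒞, ∃ (J : Type v) (_ : SmallCategory J) (_ : IsFiltered J)
      (D : J ⥤ 𝒞) (c : Cocone D) (_ : Nonempty (IsColimit c)),
      c.pt = X ∧ ∀ j, D.obj j ∈ S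

/-- `l : X ⟶ Y` belongs to the coslice generator `𝒢_X`: it is a pushout of a morphism
between finitely presented objects along a map into `X`. -/
def InGen {X Y : 𝒞} (l : X ⟶ Y) : Prop :=
  ∃ (K K' : 𝒞) (_ : IsFinPres K) (_ : IsFinPres K') (k : K ⟶ K') (a : K ⟶ X)
    (c : K' ⟶ Y), IsPushout a k l c

end Defs

/-!
For `Y = (N, C, g)`, a morphism `X ⟶ Y` is a pair `(u : M ⟶ N, w : B ⟶ C)` with
`F_*(u) ≫ g = f ≫ w`; since `f` is the pushout of `k` along `a`, giving `w` amounts to giving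
`v : K' ⟶ C` with `a ≫ F_*(u) ≫ g = k ≫ v`. Hence `Hom(X, -)` is the pullback of
`Hom(M, -.left) ⟶ Hom(K, -.right) ⟵ Hom(K', -.right)`. Filtered colimits in `F_*↓ℬ` are computed
componentwise, so these three functors preserve them, and so does their pullback because filtered
colimits commute with finite limits of types.
-/

theorem isFinPres_iff_isFinitelyPresentable {𝒞 : Type u} [Category.{v} 𝒞] (K : 𝒞) :
    IsFinPres K ↔ IsFinitelyPresentable.{v} K := by
  rw [isFinitelyPresentable_iff_preservesFilteredColimits]
  exact ⟨fun h => ⟨fun J _ _ => (h J _ ‹_›).some⟩, fun _ _ _ _ => ⟨inferInstance⟩⟩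

namespace CategoryTheory.Comma

variable {𝒜 : Type u} {ℬ : Type w} {𝒞 : Type*} [Category.{v} 𝒜] [Category.{v} ℬ]
  [Category.{v} 𝒞] {L : 𝒜 ⥤ ℬ}

section Projections

variable {R : 𝒞 ⥤ ℬ}

@[simps]
def coyonedaObjLeft (X : Comma L R) :
    coyoneda.obj (op X) ⟶ fst L R ⋙ coyoneda.obj (op X.left) where
  app Y := TypeCat.ofHom fun φ : X ⟶ Y => φ.left

@[simps]
def coyonedaObjRight (X : Comma L R) {K' : 𝒞} (c : K' ⟶ X.right) :
    coyoneda.obj (op X) ⟶ snd L R ⋙ coyoneda.obj (op K') where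
  app Y := TypeCat.ofHom fun φ : X ⟶ Y => c ≫ φ.right

variable [HasFilteredColimits 𝒜] [HasFilteredColimits 𝒞] [PreservesFilteredColimits L]

instance : PreservesFilteredColimits (fst L R) := ⟨fun _ _ _ => inferInstance⟩

instance : PreservesFilteredColimits (snd L R) := ⟨fun _ _ _ => inferInstance⟩

end Projections

@[simps]
def coyonedaFstToSnd {A : 𝒜} {K : ℬ} (a : K ⟶ L.obj A) :
    fst L (𝟭 ℬ) ⋙ coyoneda.obj (op A) ⟶ snd L (𝟭 ℬ) ⋙ coyoneda.obj (op K) where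
  app Y := TypeCat.ofHom fun u : A ⟶ Y.left => a ≫ L.map u ≫ Y.hom
  naturality Y Y' φ := by
    ext u
    simp

theorem isPullback_coyoneda_of_isPushout {X : Comma L (𝟭 ℬ)} {K K' : ℬ} {k : K ⟶ K'}
    {a : K ⟶ L.obj X.left} {c : K' ⟶ X.right} (h : IsPushout a k X.hom c) :
    IsPullback (coyonedaObjLeft X) (coyonedaObjRight X c) (coyonedaFstToSnd a)
      (Functor.whiskerLeft (snd L (𝟭 ℬ)) (coyoneda.map k.op)) := by
  refine .of_forall_isPullback_app fun Y => (Types.isPullback_iff _ _ _ _).2 ⟨?_, ?_, ?_⟩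
  · ext φ
    simp [reassoc_of% h.w]
  · rintro φ ψ ⟨hl, hr⟩
    change φ.left = ψ.left at hl
    change c ≫ φ.right = c ≫ ψ.right at hr
    refine Comma.hom_ext _ _ hl (h.hom_ext ?_ hr)
    have hφ : L.map φ.left ≫ Y.hom = X.hom ≫ φ.right := φ.w
    have hψ : L.map ψ.left ≫ Y.hom = X.hom ≫ ψ.right := ψ.w
    rw [← hφ, ← hψ, hl]
  · intro u v huv
    change a ≫ L.map u ≫ Y.hom = k ≫ v at huv
    exact ⟨⟨u, h.desc (L.map u ≫ Y.hom) v huv, by simp⟩, rfl, by simp⟩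

open Cardinal in
theorem isFinitelyPresentable_of_isPushout [HasFilteredColimits 𝒜] [HasFilteredColimits ℬ]
    [PreservesFilteredColimits L] {X : Comma L (𝟭 ℬ)} [IsFinitelyPresentable.{v} X.left]
    {K K' : ℬ} [IsFinitelyPresentable.{v} K] [IsFinitelyPresentable.{v} K'] {k : K ⟶ K'}
    {a : K ⟶ L.obj X.left} {c : K' ⟶ X.right} (h : IsPushout a k X.hom c) :
    IsFinitelyPresentable.{v} X := by
  have := fact_isRegular_aleph0
  have : (fst L (𝟭 ℬ)).IsFinitelyAccessible.{v} :=
    Functor.isFinitelyAccessible_iff_preservesFilteredColimits.2 inferInstance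
  have : (snd L (𝟭 ℬ)).IsFinitelyAccessible.{v} :=
    Functor.isFinitelyAccessible_iff_preservesFilteredColimits.2 inferInstance
  have : ∀ j, ((cospan (coyonedaFstToSnd a)
      (Functor.whiskerLeft (snd L (𝟭 ℬ)) (coyoneda.map k.op))).obj j).IsFinitelyAccessible.{v} := by
    rintro (_ | _ | _) <;> dsimp <;> infer_instance
  exact Functor.isCardinalAccessible_of_isLimit _ (isPullback_coyoneda_of_isPushout h).isLimit ℵ₀
    (by rw [hasCardinalLT_aleph0_iff]; infer_instance)

end CategoryTheory.Comma

theorem stmt17_general {𝒜 : Type u} {ℬ : Type w} [Category.{v} 𝒜] [Category.{v} ℬ]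
    [IsLFP 𝒜] [IsLFP ℬ] (Fst : 𝒜 ⥤ ℬ)
    (hfin : ∀ (J : Type v) (_ : SmallCategory J) (_ : IsFiltered J),
      Nonempty (PreservesColimitsOfShape J Fst))
    (X : Comma Fst (𝟭 ℬ)) (hM : IsFinPres X.left) (hX : InGen X.hom) :
    IsFinPres X := by
  obtain ⟨K, K', hK, hK', k, a, c, h⟩ := hX
  have : PreservesFilteredColimits Fst := ⟨fun J _ _ => (hfin J _ ‹_›).some⟩
  rw [isFinPres_iff_isFinitelyPresentable] at hM hK hK' ⊢
  exact Comma.isFinitelyPresentable_of_isPushout h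

/-- For a morphism of LFP categories `F* ⊣ F_*`, every object `(M, B, f : F_*(M) ⟶ B)` of
the comma category `F_*↓ℬ` with `M` finitely presented and `f` a pushout of a morphism
between finitely presented objects of `ℬ` is finitely presented in `F_*↓ℬ`. -/
theorem stmt17 {𝒜 : Type u} {ℬ : Type w} [Category.{v} 𝒜] [Category.{v} ℬ]
    [IsLFP 𝒜] [IsLFP ℬ] (Fst : 𝒜 ⥤ ℬ) (Fup : ℬ ⥤ 𝒜) (adj : Fup ⊣ Fst)
    (hcont : Nonempty (PreservesLimits Fst))
    (hfin : ∀ (J : Type v) (_ : SmallCategory J) (_ : IsFiltered J),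
      Nonempty (PreservesColimitsOfShape J Fst))
    (X : Comma Fst (𝟭 ℬ)) (hM : IsFinPres X.left) (hX : InGen X.hom) :
    IsFinPres X :=
  stmt17_general Fst hfin X hM hX
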